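/- Let Θ : A ⊗ B → A ⊗ B be a unital algebra homomorphism, a ∈ A with Θ(a ⊗ 1) = a ⊗ 1, F ∈ B, σ a state on B and ω a state on A with ω(ε_σ(F)) ≠ 0. Define the selectively updated state ω'(x) = (ω ⊗ σ)(Θ(x ⊗ F)) / (ω ⊗ σ)(Θ(1 ⊗ F)). Then ω'(a) = ω(a · ε_σ(F)) / ω(ε_σ(F)), and ω'(a) = ω(a) if and only if ω(a · ε_σ(F)) = ω(a) ω(ε_σ(F)). -/
import Mathlib


open scoped TensorProduct ComplexOrder

/-- The map `η_σ : A ⊗ B → A` determined by `η_σ(a ⊗ b) = σ(b) • a`. -/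
noncomputable def eta {A B : Type*} [Ring A] [Ring B] [Algebra ℂ A] [Algebra ℂ B]
    (σ : B →ₗ[ℂ] ℂ) : A ⊗[ℂ] B →ₗ[ℂ] A :=
  (TensorProduct.rid ℂ A).toLinearMap ∘ₗ TensorProduct.map LinearMap.id σ

/-- The product functional `ω ⊗ σ` on `A ⊗ B`. -/
noncomputable def tensorFun {A B : Type*} [Ring A] [Ring B] [Algebra ℂ A] [Algebra ℂ B]
    (ω : A →ₗ[ℂ] ℂ) (σ : B →ₗ[ℂ] ℂ) : A ⊗[ℂ] B →ₗ[ℂ] ℂ :=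
  (TensorProduct.lid ℂ ℂ).toLinearMap ∘ₗ TensorProduct.map ω σ

lemma tensorFun_mul_left {A B : Type*} [Ring A] [Ring B] [Algebra ℂ A] [Algebra ℂ B]
    (ω : A →ₗ[ℂ] ℂ) (σ : B →ₗ[ℂ] ℂ) (a : A) (T : A ⊗[ℂ] B) :
    tensorFun ω σ ((a ⊗ₜ[ℂ] (1 : B)) * T) = ω (a * eta σ T) := by
  induction T using TensorProduct.induction_on with
  | zero => simp
  | tmul x y =>
      simp [tensorFun, eta, Algebra.TensorProduct.tmul_mul_tmul, mul_comm]
  | add s t hs ht => simp [mul_add, hs, ht]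

/-- For `a` with `Θ(a ⊗ 1) = a ⊗ 1`, the selectively updated state
`ω'(x) = (ω ⊗ σ)(Θ(x ⊗ F)) / (ω ⊗ σ)(Θ(1 ⊗ F))` satisfies
`ω'(a) = ω(a ε_σ(F)) / ω(ε_σ(F))`, and `ω'(a) = ω(a)` iff `a` and `ε_σ(F)` are
uncorrelated in `ω`, i.e. `ω(a ε_σ(F)) = ω(a) ω(ε_σ(F))`. -/
theorem selective_update_correlation {A B : Type*} [Ring A] [Ring B] [Algebra ℂ A]
    [Algebra ℂ B] [StarRing A] [StarModule ℂ A] [StarRing B] [StarModule ℂ B]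
    (ω : A →ₗ[ℂ] ℂ) (hω1 : ω 1 = 1) (hωpos : ∀ x : A, 0 ≤ ω (star x * x))
    (σ : B →ₗ[ℂ] ℂ) (hσ1 : σ 1 = 1) (hσpos : ∀ y : B, 0 ≤ σ (star y * y))
    (Θ : A ⊗[ℂ] B →ₐ[ℂ] A ⊗[ℂ] B) (F : B)
    (a : A) (ha : Θ (a ⊗ₜ[ℂ] (1 : B)) = a ⊗ₜ[ℂ] (1 : B))
    (hne : ω (eta σ (Θ ((1 : A) ⊗ₜ[ℂ] F))) ≠ 0)
    (ω' : A → ℂ)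
    (hω' : ∀ x : A, ω' x = tensorFun ω σ (Θ (x ⊗ₜ[ℂ] F)) /
      tensorFun ω σ (Θ ((1 : A) ⊗ₜ[ℂ] F))) :
    ω' a = ω (a * eta σ (Θ ((1 : A) ⊗ₜ[ℂ] F))) / ω (eta σ (Θ ((1 : A) ⊗ₜ[ℂ] F))) ∧
    (ω' a = ω a ↔
      ω (a * eta σ (Θ ((1 : A) ⊗ₜ[ℂ] F))) = ω a * ω (eta σ (Θ ((1 : A) ⊗ₜ[ℂ] F)))) := by
  set T := Θ ((1 : A) ⊗ₜ[ℂ] F) with hT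
  have hfact : Θ (a ⊗ₜ[ℂ] F) = (a ⊗ₜ[ℂ] (1 : B)) * T := by
    have h1 : a ⊗ₜ[ℂ] F = (a ⊗ₜ[ℂ] (1 : B)) * ((1 : A) ⊗ₜ[ℂ] F) := by
      simp [Algebra.TensorProduct.tmul_mul_tmul]
    rw [hT, h1, map_mul, ha]
  have hnum : tensorFun ω σ (Θ (a ⊗ₜ[ℂ] F)) = ω (a * eta σ T) := by
    rw [hfact, tensorFun_mul_left]
  have hden : tensorFun ω σ T = ω (eta σ T) := by
    have := tensorFun_mul_left ω σ 1 T
    simpa [← Algebra.TensorProduct.one_def] using this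
  have hmain : ω' a = ω (a * eta σ T) / ω (eta σ T) := by
    rw [hω', hnum, hden]
  refine ⟨hmain, ?_⟩
  rw [hmain, div_eq_iff hne, mul_comm (ω a)]
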